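/- For every real ε > 0, setting c = 4·⌈1/ε⌉, the following holds: for every (finite) rooted tree T and every list assignment {L_v}_{v ∈ V(T)} with |L_v| ≥ c for every vertex v, there exists a coloring f of T with f(v) ∈ L_v for every vertex v that is vertically x^{1+ε}-free, i.e., no vertical path in T has a color sequence of the form x^{1+ε}. -/

import Mathlib

/-- A finite sequence is of the form `x^r` (for a real `r ≥ 1`) if it consists of
`⌊r⌋` consecutive copies of a nonempty base `x`, followed by the prefix of `x` of
length `⌈frac(r)·|x|⌉`, where `frac(r)` is the fractional part of `r`. -/
def IsFormPow (r : ℝ) (l : List ℕ) : Prop :=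
  ∃ x : List ℕ, x ≠ [] ∧
    l = (List.replicate ⌊r⌋₊ x).flatten ++ x.take ⌈Int.fract r * (x.length : ℝ)⌉₊

/-- In a graph `G` rooted at `root`, `u` is a descendant of `v` if every simple
path from `u` to the root contains `v` (in a tree the simple path is unique). -/
def IsDescendant {V : Type} (G : SimpleGraph V) (root u v : V) : Prop :=
  ∀ p : G.Walk u root, p.IsPath → v ∈ p.support

/-- A simple path is vertical if its first vertex is a descendant of its last
vertex or vice versa. -/
def IsVerticalPath {V : Type} (G : SimpleGraph V) (root : V) {u w : V}
    (p : G.Walk u w) : Prop :=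
  p.IsPath ∧ (IsDescendant G root u w ∨ IsDescendant G root w u)

/-!
Colour the tree from the root down, choosing the colour of a vertex from its list as a function of
the colours of its ancestors. A vertical path lies on a branch, so it suffices to build a word
letter by letter, each letter from a list of `4k` colours, `k = ⌈1/ε⌉`, so that no suffix has the
form `x^{1+ε}`. Store the word newest letter first: a suffix `x^{1+ε}` with `|x| = n` is a run of
`t(n)` coincidences `w[i] = w[i + n]` at the head of the word, where `k t(n) ≥ n`.

Keep every run shorter than `t(n)` and the potential `∑ₙ (2^{run(n)} - 1) / 2^{t(n)}` at most
`1/2`. A period is ready if its run is `t(n) - 1`; it forbids one colour and has weight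
`1/2 - 2^{-t(n)}`, and as `∑ₙ 2^{-t(n)} ≤ k` there are at most `2k + 1` ready periods. A new
letter maps the weight `q` of each period it continues to `2q + 2^{-t(n)}` and resets all other
weights to `0`, so averaging over the remaining colours shows that one of them keeps the
potential at most `1/2`.
-/

namespace List

variable {α : Type*}

lemma HasPeriod.reverse {n : ℕ} {l : List α} (h : l.HasPeriod n) : l.reverse.HasPeriod n := by
  rw [hasPeriod_iff_getElem?] at h ⊢
  intro i hi
  rw [length_reverse] at hi
  rw [getElem?_reverse (by omega), getElem?_reverse (by omega),
    show l.length - 1 - i = l.length - 1 - (i + n) + n by omega]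
  exact (h _ (by omega)).symm

variable [DecidableEq α]

/-- The number of consecutive `i`, starting from `0`, with `w[i + n] = w[i]`. -/
def periodRun : List α → ℕ → ℕ
  | [], _ => 0
  | a :: w, n => if (a :: w)[n]? = some a then periodRun w n + 1 else 0

lemma periodRun_cons {n : ℕ} (hn : 1 ≤ n) (a : α) (w : List α) :
    (a :: w).periodRun n = if w[n - 1]? = some a then w.periodRun n + 1 else 0 := by
  obtain ⟨m, rfl⟩ := Nat.exists_eq_add_of_le hn
  simp [periodRun, Nat.add_comm 1 m]

lemma periodRun_cons_length (a : α) (w : List α) : (a :: w).periodRun (w.length + 1) = 0 := by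
  simp [periodRun]

lemma HasPeriod.length_sub_le_periodRun {n : ℕ} {l W : List α} (hl : l.HasPeriod n)
    (hW : l <+: W) : l.length - n ≤ W.periodRun n := by
  induction l generalizing W with
  | nil => simp
  | cons a l ih =>
    obtain ⟨s, rfl⟩ := hW
    have ih' := ih (hl.infix (suffix_cons a l).isInfix) (prefix_append l s)
    by_cases hn : n ≤ l.length
    · have hmatch : (a :: (l ++ s))[n]? = some a := by
        have h0 := hasPeriod_iff_getElem?.1 hl 0 (by simp; omega)
        rw [zero_add] at h0
        rw [← cons_append, getElem?_append_left (by simp; omega), ← h0]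
        simp
      rw [cons_append, periodRun, if_pos hmatch]
      simp only [length_cons]
      omega
    · simp only [length_cons]
      omega

end List

/-- The `t(n)` of the proof: an `r`-power with a base of length `n` has length
`n + powExcess r n`. -/
noncomputable def powExcess (r : ℝ) (n : ℕ) : ℕ := (⌊r⌋₊ - 1) * n + ⌈Int.fract r * n⌉₊

lemma IsFormPow.exists_hasPeriod {r : ℝ} (hr : 1 ≤ r) {l : List ℕ} (h : IsFormPow r l) :
    ∃ n, 1 ≤ n ∧ l.HasPeriod n ∧ l.length = n + powExcess r n := by
  obtain ⟨x, hx, rfl⟩ := h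
  obtain ⟨b, hb⟩ : ∃ b, ⌊r⌋₊ = b + 1 :=
    Nat.exists_eq_add_one.2 (Nat.one_le_floor_iff r |>.2 hr)
  set c := ⌈Int.fract r * x.length⌉₊
  have hc : c ≤ x.length := Nat.ceil_le.2 <| mul_le_of_le_one_left (Nat.cast_nonneg _)
    (Int.fract_lt_one r).le
  set rest := (List.replicate b x).flatten ++ x.take c
  have hsplit : (List.replicate (b + 1) x).flatten ++ x.take c = x ++ rest := by
    simp [rest, List.replicate_succ]
  have hrest : rest <+: x ++ rest := by
    have hcomm : (List.replicate b x).flatten ++ x = x ++ (List.replicate b x).flatten := by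
      rw [← List.flatten_cons, ← List.replicate_succ, List.replicate_succ', List.flatten_append]
      simp
    exact ((List.prefix_append_right_inj _).2 (List.take_prefix c x)).trans <|
      hcomm ▸ (List.prefix_append_right_inj x).2 (List.prefix_append _ _)
  refine ⟨x.length, List.length_pos_iff.2 hx, ?_, ?_⟩
  · rw [hb, hsplit, List.HasPeriod, List.take_left]
    exact (List.prefix_append_right_inj x).2 hrest
  · simp [hb, powExcess, List.length_flatten, hc, c]
    ring

lemma sub_one_mul_le_powExcess {r : ℝ} (hr : 1 ≤ r) (n : ℕ) : (r - 1) * n ≤ powExcess r n := by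
  have hb : 1 ≤ ⌊r⌋₊ := Nat.one_le_floor_iff r |>.2 hr
  have hr' : (⌊r⌋₊ : ℝ) + Int.fract r = r := by
    rw [natCast_floor_eq_intCast_floor (by linarith), Int.floor_add_fract]
  have hceil := Nat.le_ceil (Int.fract r * n)
  simp only [powExcess, Nat.cast_add, Nat.cast_mul, Nat.cast_sub hb, Nat.cast_one]
  nlinarith

lemma le_ceil_inv_mul_powExcess {ε : ℝ} (hε : 0 < ε) (n : ℕ) :
    n ≤ ⌈1 / ε⌉₊ * powExcess (1 + ε) n := by
  have hk : 1 / ε ≤ ⌈1 / ε⌉₊ := Nat.le_ceil _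
  have hex := sub_one_mul_le_powExcess (by linarith : 1 ≤ 1 + ε) n
  rw [add_sub_cancel_left] at hex
  have : (n : ℝ) ≤ ⌈1 / ε⌉₊ * powExcess (1 + ε) n := calc
    (n : ℝ) = 1 / ε * (ε * n) := by field_simp
    _ ≤ ⌈1 / ε⌉₊ * powExcess (1 + ε) n := by gcongr
  exact_mod_cast this

namespace RepetitionFree

open Finset

variable {α : Type*} [DecidableEq α] {t : ℕ → ℕ} {k : ℕ}

def RunBounded (t : ℕ → ℕ) (w : List α) : Prop :=
  ∀ n, 1 ≤ n → w.periodRun n < t n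

lemma runBounded_nil (hk : ∀ n, n ≤ k * t n) : RunBounded t ([] : List α) := fun n hn =>
  Nat.pos_of_ne_zero fun h => by simpa [h] using (hk n).trans_lt' hn

lemma RunBounded.not_isPrefix {W l : List α} (hW : RunBounded t W) {n : ℕ} (hn : 1 ≤ n)
    (hl : l.HasPeriod n) (hlen : l.length = n + t n) : ¬ l <+: W := fun h => by
  have := hl.length_sub_le_periodRun h
  have := hW n hn
  omega

noncomputable def weight (t : ℕ → ℕ) (w : List α) (n : ℕ) : ℝ :=
  ((2 : ℝ) ^ w.periodRun n - 1) / 2 ^ t n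

noncomputable def potential (t : ℕ → ℕ) (w : List α) : ℝ :=
  ∑ n ∈ Icc 1 w.length, weight t w n

def ready (t : ℕ → ℕ) (w : List α) : Finset ℕ :=
  {n ∈ Icc 1 w.length | w.periodRun n + 1 = t n}

/-- The colours forbidden by ready periods, in `Option α` so that no default colour is needed. -/
def readyColors (t : ℕ → ℕ) (w : List α) : Finset (Option α) :=
  (ready t w).image fun n => w[n - 1]?

lemma weight_nonneg (t : ℕ → ℕ) (w : List α) (n : ℕ) : 0 ≤ weight t w n :=
  div_nonneg (sub_nonneg.2 (one_le_pow₀ (by norm_num))) (by positivity)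

lemma weight_of_mem_ready {w : List α} {n : ℕ} (hn : n ∈ ready t w) :
    weight t w n = 1 / 2 - 1 / 2 ^ t n := by
  rw [weight, ← (mem_filter.1 hn).2, pow_succ]
  field_simp

lemma potential_cons (t : ℕ → ℕ) (a : α) (w : List α) :
    potential t (a :: w) = ∑ n ∈ Icc 1 w.length,
      if w[n - 1]? = some a then 2 * weight t w n + 1 / 2 ^ t n else 0 := by
  rw [potential, List.length_cons, sum_Icc_succ_top (by omega), weight,
    List.periodRun_cons_length]
  simp only [pow_zero, sub_self, zero_div, add_zero]
  refine sum_congr rfl fun n hn => ?_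
  simp only [weight, List.periodRun_cons (mem_Icc.1 hn).1]
  split_ifs
  · ring
  · simp

lemma runBounded_cons {w : List α} (hw : RunBounded t w) {a : α}
    (ha : some a ∉ readyColors t w) : RunBounded t (a :: w) := by
  intro n hn
  have hrun := hw n hn
  rw [List.periodRun_cons hn]
  split_ifs with h
  · have hlt : n - 1 < w.length := (List.getElem?_eq_some_iff.1 h).1
    have hnr : w.periodRun n + 1 ≠ t n := fun hr =>
      ha (mem_image.2 ⟨n, mem_filter.2 ⟨mem_Icc.2 ⟨hn, by omega⟩, hr⟩, h⟩)
    omega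
  · omega

lemma card_le_card_filter_add_card_ready (w : List α) (S : Finset α) :
    S.card ≤ {a ∈ S | some a ∉ readyColors t w}.card + (ready t w).card := by
  have hforbidden : {a ∈ S | ¬some a ∉ readyColors t w}.card ≤ (readyColors t w).card :=
    card_le_card_of_injOn some (fun a ha => by simpa using (mem_filter.1 ha).2)
      (Option.some_injective α).injOn
  have hS := card_filter_add_card_filter_not (s := S) fun a => some a ∉ readyColors t w
  have hR : (readyColors t w).card ≤ (ready t w).card := card_image_le
  omega

lemma sum_ite_eq_some_le {s : Finset α} (x : Option α) {c : ℝ} (hc : 0 ≤ c) :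
    ∑ a ∈ s, (if x = some a then c else 0) ≤ c := by
  cases x with
  | none => simp [hc]
  | some b =>
    simp only [Option.some_inj, sum_ite_eq]
    split_ifs <;> simp [hc]

lemma sum_potential_cons_le (t : ℕ → ℕ) (w : List α) (S : Finset α) :
    ∑ a ∈ S with some a ∉ readyColors t w, potential t (a :: w) ≤
      ∑ n ∈ Icc 1 w.length with w.periodRun n + 1 ≠ t n, (2 * weight t w n + 1 / 2 ^ t n) := by
  simp_rw [potential_cons]
  rw [sum_comm, sum_filter]
  refine sum_le_sum fun n hn => ?_
  split_ifs with hr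
  · exact sum_ite_eq_some_le _
      (add_nonneg (mul_nonneg zero_le_two (weight_nonneg t w n)) (by positivity))
  · refine (sum_eq_zero fun a ha => if_neg fun h => ?_).le
    exact (mem_filter.1 ha).2 (mem_image.2 ⟨n, mem_filter.2 ⟨hn, not_not.1 hr⟩, h⟩)

lemma sum_range_div_eq_nsmul_sum {M : Type*} [AddCommMonoid M] (g : ℕ → M) (hk : 0 < k)
    (N : ℕ) : ∑ m ∈ range (k * N), g (m / k) = k • ∑ j ∈ range N, g j := by
  induction N with
  | zero => simp
  | succ N ih =>
    rw [Nat.mul_succ, sum_range_add, ih, sum_range_succ, smul_add]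
    congr 1
    rw [sum_congr rfl fun i hi => by
      rw [Nat.mul_add_div hk, Nat.div_eq_of_lt (mem_range.1 hi), add_zero]]
    simp

lemma sum_one_div_two_pow_le (hk : ∀ n, n ≤ k * t n) (N : ℕ) :
    ∑ n ∈ Icc 1 N, 1 / (2 : ℝ) ^ t n ≤ k := by
  have hk0 : 0 < k := Nat.pos_of_ne_zero fun h => by simpa [h] using hk 1
  have hgeom : ∑ j ∈ range N, (1 / 2 : ℝ) ^ (j + 1) ≤ 1 := by
    simp_rw [pow_succ, ← sum_mul]
    linarith [sum_geometric_two_le N]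
  calc ∑ n ∈ Icc 1 N, 1 / (2 : ℝ) ^ t n
      ≤ ∑ n ∈ Icc 1 N, (1 / 2 : ℝ) ^ ((n - 1) / k + 1) := sum_le_sum fun n hn => by
        have hn1 := (mem_Icc.1 hn).1
        have := hk n
        rw [one_div_pow]
        gcongr
        · norm_num
        · exact Nat.div_lt_of_lt_mul (by omega)
    _ = ∑ m ∈ range N, (1 / 2 : ℝ) ^ (m / k + 1) := by
        rw [← Ico_add_one_right_eq_Icc, sum_Ico_eq_sum_range]
        simp
    _ ≤ ∑ m ∈ range (k * N), (1 / 2 : ℝ) ^ (m / k + 1) :=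
        sum_le_sum_of_subset_of_nonneg (range_subset_range.2 (Nat.le_mul_of_pos_left N hk0))
          fun _ _ _ => by positivity
    _ = k * ∑ j ∈ range N, (1 / 2 : ℝ) ^ (j + 1) := by
        rw [sum_range_div_eq_nsmul_sum (fun j => (1 / 2 : ℝ) ^ (j + 1)) hk0 N, nsmul_eq_mul]
    _ ≤ k := mul_le_of_le_one_right (Nat.cast_nonneg _) hgeom

lemma card_ready_div_two_add_le (hk : ∀ n, n ≤ k * t n) (w : List α) :
    ((ready t w).card : ℝ) / 2 +
        ∑ n ∈ Icc 1 w.length with w.periodRun n + 1 ≠ t n, (weight t w n + 1 / 2 ^ t n) ≤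
      potential t w + k := by
  have hR : ((ready t w).card : ℝ) / 2 = ∑ n ∈ ready t w, (weight t w n + 1 / 2 ^ t n) := by
    rw [sum_congr rfl fun n hn => by rw [weight_of_mem_ready hn, sub_add_cancel], sum_const,
      nsmul_eq_mul]
    ring
  rw [hR, ready, sum_filter_add_sum_filter_not, sum_add_distrib, potential]
  linarith [sum_one_div_two_pow_le hk w.length]

theorem exists_cons_runBounded (hk : ∀ n, n ≤ k * t n) {w : List α} (hw : RunBounded t w)
    (hψ : potential t w ≤ 1 / 2) (S : Finset α) (hS : 4 * k ≤ S.card) :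
    ∃ a ∈ S, RunBounded t (a :: w) ∧ potential t (a :: w) ≤ 1 / 2 := by
  set good := {a ∈ S | some a ∉ readyColors t w}
  set notReady := {n ∈ Icc 1 w.length | w.periodRun n + 1 ≠ t n}
  have hk1 : (1 : ℝ) ≤ k := by exact_mod_cast Nat.pos_of_ne_zero fun h => by simpa [h] using hk 1
  have hready := card_ready_div_two_add_le hk w
  have hnonneg : 0 ≤ ∑ n ∈ notReady, (weight t w n + 1 / 2 ^ t n) :=
    sum_nonneg fun n _ => add_nonneg (weight_nonneg t w n) (by positivity)
  have hcard : (4 * k : ℝ) ≤ good.card + (ready t w).card := by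
    exact_mod_cast hS.trans (card_le_card_filter_add_card_ready w S)
  have hsum : ∑ a ∈ good, potential t (a :: w) ≤
      ∑ n ∈ notReady, (weight t w n + 1 / 2 ^ t n) + potential t w := by
    have hsub : ∑ n ∈ notReady, weight t w n ≤ potential t w :=
      sum_le_sum_of_subset_of_nonneg (filter_subset _ _) fun n _ _ => weight_nonneg t w n
    calc ∑ a ∈ good, potential t (a :: w)
        ≤ ∑ n ∈ notReady, (2 * weight t w n + 1 / 2 ^ t n) := sum_potential_cons_le t w S
      _ = ∑ n ∈ notReady, (weight t w n + 1 / 2 ^ t n) + ∑ n ∈ notReady, weight t w n := by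
        rw [← sum_add_distrib]
        exact sum_congr rfl fun n _ => by ring
      _ ≤ _ := by linarith
  by_contra! hcon
  have hgood : good.Nonempty := by
    rw [← card_pos, ← Nat.cast_pos (α := ℝ)]
    linarith
  have hlt : (good.card : ℝ) / 2 < ∑ a ∈ good, potential t (a :: w) :=
    calc (good.card : ℝ) / 2 = ∑ a ∈ good, (1 / 2 : ℝ) := by
          rw [sum_const, nsmul_eq_mul]
          ring
      _ < ∑ a ∈ good, potential t (a :: w) := sum_lt_sum_of_nonempty hgood fun a ha =>
        hcon a (mem_filter.1 ha).1 (runBounded_cons hw (mem_filter.1 ha).2)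
  linarith

end RepetitionFree

namespace SimpleGraph.IsTree

variable {V : Type} {α : Type*} {G : SimpleGraph V} (hT : G.IsTree)

noncomputable def path (u v : V) : G.Walk u v := (hT.existsUnique_path u v).choose

lemma isPath_path (u v : V) : (hT.path u v).IsPath := (hT.existsUnique_path u v).choose_spec.1

lemma eq_path {u v : V} {p : G.Walk u v} (hp : p.IsPath) : p = hT.path u v :=
  (hT.existsUnique_path u v).unique hp (hT.isPath_path u v)

lemma support_tail_path (v root : V) :
    (hT.path v root).support.tail = [] ∨ ∃ p, (hT.path v root).support.tail =
      (hT.path p root).support ∧ (hT.path p root).length < (hT.path v root).length := by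
  obtain ⟨q, hq⟩ : ∃ q, hT.path v root = q := ⟨_, rfl⟩
  have hqp : q.IsPath := hq ▸ hT.isPath_path v root
  rw [hq]
  cases q with
  | nil => simp
  | cons _ q =>
    rw [hT.eq_path hqp.of_cons]
    exact .inr ⟨_, rfl, by simp⟩

lemma support_path_isPrefix {root u v : V} {p : G.Walk u v} (hp : p.IsPath)
    (huv : IsDescendant G root u v) : p.support <+: (hT.path u root).support := by
  classical
  have hv : v ∈ (hT.path u root).support := huv _ (hT.isPath_path u root)
  rw [hT.eq_path hp, ← hT.eq_path ((hT.isPath_path u root).takeUntil hv)]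
  exact Walk.support_takeUntil_prefix_support _ _

theorem exists_forall_map_support_path (root : V) (L : V → Finset α) (P : List α → Prop)
    (hnil : P []) (hcons : ∀ v w, P w → ∃ a ∈ L v, P (a :: w)) :
    ∃ f : V → α, (∀ v, f v ∈ L v) ∧ ∀ v, P ((hT.path v root).support.map f) := by
  have hchoice : ∀ v w, ∃ a, P w → a ∈ L v ∧ P (a :: w) := fun v w => by
    by_cases hw : P w
    · obtain ⟨a, ha, hPa⟩ := hcons v w hw
      exact ⟨a, fun _ => ⟨ha, hPa⟩⟩
    · obtain ⟨a, -⟩ := hcons v [] hnil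
      exact ⟨a, hw.elim⟩
  choose g hg using hchoice
  set color : List V → List α := List.foldr (fun u w => g u w :: w) []
  have hcolor : ∀ l, P (color l) := fun l => by
    induction l with
    | nil => exact hnil
    | cons u l ih => exact (hg u _ ih).2
  set f : V → α := fun v => g v (color (hT.path v root).support.tail)
  have hmap : ∀ n v, (hT.path v root).length = n →
      (hT.path v root).support.map f = color (hT.path v root).support := by
    intro n
    induction n using Nat.strong_induction_on with
    | _ n ih =>
      intro v hv
      rw [← (hT.path v root).cons_tail_support, List.map_cons]
      change f v :: _ = g v (color _) :: color _
      congr 1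
      rcases hT.support_tail_path v root with h | ⟨p, hp, hlt⟩
      · simp [h, color]
      · rw [hp]
        exact ih _ (hv ▸ hlt) p rfl
  exact ⟨f, fun v => (hg v _ (hcolor _)).1, fun v => hmap _ v rfl ▸ hcolor _⟩

end SimpleGraph.IsTree

/-- For every `ε > 0`, with `c = 4·⌈1/ε⌉`, every finite rooted tree admits, for any
lists of size at least `c`, a coloring chosen from the lists in which no vertical
path has a color sequence of the form `x^{1+ε}`. -/
theorem vertically_x_one_plus_eps_free_choice_trees :
    ∀ ε : ℝ, 0 < ε →
      ∀ (V : Type) [Fintype V] (G : SimpleGraph V) (root : V),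
        G.IsTree →
        ∀ L : V → Finset ℕ, (∀ v : V, 4 * ⌈1 / ε⌉₊ ≤ (L v).card) →
        ∃ f : V → ℕ, (∀ v : V, f v ∈ L v) ∧
          ∀ (u w : V) (p : G.Walk u w), IsVerticalPath G root p →
            ¬ IsFormPow (1 + ε) (p.support.map f) := by
  intro ε hε V _ G root hT L hL
  have hk := le_ceil_inv_mul_powExcess hε
  obtain ⟨f, hfL, hf⟩ := hT.exists_forall_map_support_path root L
    (fun w => RepetitionFree.RunBounded (powExcess (1 + ε)) w ∧
      RepetitionFree.potential (powExcess (1 + ε)) w ≤ 1 / 2)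
    ⟨RepetitionFree.runBounded_nil hk, by simp [RepetitionFree.potential]⟩
    fun v _ hw => RepetitionFree.exists_cons_runBounded hk hw.1 hw.2 (L v) (hL v)
  refine ⟨f, hfL, fun u w p ⟨hp, hdesc⟩ hform => ?_⟩
  obtain ⟨n, hn, hper, hlen⟩ := hform.exists_hasPeriod (by linarith)
  rcases hdesc with h | h
  · exact (hf u).1.not_isPrefix hn hper hlen ((hT.support_path_isPrefix hp h).map f)
  · have hpre := (hT.support_path_isPrefix hp.reverse h).map f
    rw [SimpleGraph.Walk.support_reverse, List.map_reverse] at hpre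
    exact (hf w).1.not_isPrefix hn hper.reverse (by rw [List.length_reverse, hlen]) hpre
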